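/- With the strings s_h, s'_h as constructed from arcs e_h of a directed graph G (Theorem 4 construction), for distinct h, h': |overlap(s_h, s'_{h'})| = n−2 if the head of e_h equals the tail of e_{h'}, and 0 otherwise; moreover |overlap(s'_h, s_{h'})| = |overlap(s_h, s_{h'})| = |overlap(s'_h, s'_{h'})| = 0. -/
import Mathlib


open List

/-- The length of the longest suffix of `s` that is also a prefix of `t`. -/
def ovLen (s t : List Bool) : ℕ :=
  Nat.findGreatest (fun i => s.drop (s.length - i) = t.take i) (min s.length t.length)

/-- The binary encoding of `i` as a string of length `r` (big-endian, with leading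
zeros); `false` represents '0' and `true` represents '1'. -/
def binEnc (r i : ℕ) : List Bool := (List.range r).map fun k => Nat.testBit i (r - 1 - k)

/-- `p = ⌈(n−1)/3⌉`. -/
def pOf (n : ℕ) : ℕ := (n + 1) / 3

/-- `q = n − 1 − 2p`. -/
def qOf (n : ℕ) : ℕ := n - 1 - 2 * pOf n

/-- `z = 01…1` of length `p`. -/
def zStr (n : ℕ) : List Bool := false :: List.replicate (pOf n - 1) true

/-- `z* = 1…1` of length `p`. -/
def zStar (n : ℕ) : List Bool := List.replicate (pOf n) true

/-- `x_i`: the binary encoding of the vertex index `i` of length `q − 1`. -/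
def xEnc (n i : ℕ) : List Bool := binEnc (qOf n - 1) i

/-- `y_h`: the binary encoding of `2h` of length `q` (its last symbol is '0'). -/
def yEnc (n h : ℕ) : List Bool := binEnc (qOf n) (2 * h)

/-- `s_h = z y_h z* z x_i z* z x_j z*` for the arc `e_h = (v_i, v_j)`. -/
def sh (n i j h : ℕ) : List Bool :=
  zStr n ++ yEnc n h ++ zStar n ++ zStr n ++ xEnc n i ++ zStar n ++
    zStr n ++ xEnc n j ++ zStar n

/-- `s'_h = z x_i z* z x_j z* z y_h z*` for the arc `e_h = (v_i, v_j)`. -/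
def sh' (n i j h : ℕ) : List Bool :=
  zStr n ++ xEnc n i ++ zStar n ++ zStr n ++ xEnc n j ++ zStar n ++
    zStr n ++ yEnc n h ++ zStar n

/-! ### Auxiliary infrastructure -/

lemma aux_pow : ∀ m : ℕ, 2 * (3*m + 65)^2 < 2^(m+18) := by
  intro m
  induction m with
  | zero => norm_num
  | succ k ih =>
    have h1 : 2*(3*(k+1)+65)^2 ≤ 2*(2*(3*k+65)^2) := by nlinarith [sq_nonneg k, k.zero_le]
    have h2 : 2^(k+1+18) = 2*2^(k+18) := by ring
    omega

lemma eq_of_testBit_rev {a b r : ℕ} (ha : a < 2^r) (hb : b < 2^r)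
    (h : ∀ k, k < r → a.testBit (r-1-k) = b.testBit (r-1-k)) : a = b := by
  apply Nat.eq_of_testBit_eq
  intro u
  by_cases hu : u < r
  · have := h (r-1-u) (by omega)
    rwa [show r-1-(r-1-u) = u by omega] at this
  · rw [Nat.testBit_lt_two_pow (lt_of_lt_of_le ha (Nat.pow_le_pow_right (by norm_num) (by omega))),
        Nat.testBit_lt_two_pow (lt_of_lt_of_le hb (Nat.pow_le_pow_right (by norm_num) (by omega)))]

lemma zStr_length (n : ℕ) (hp : 1 ≤ pOf n) : (zStr n).length = pOf n := by
  simp [zStr]; omega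

lemma zStar_length (n : ℕ) : (zStar n).length = pOf n := by simp [zStar]

lemma binEnc_length (r i : ℕ) : (binEnc r i).length = r := by simp [binEnc]

lemma zStr_get_zero (n : ℕ) : (zStr n)[0]? = some false := by simp [zStr]

lemma zStr_get_pos (n : ℕ) {k : ℕ} (h0 : 0 < k) (hk : k < pOf n) : (zStr n)[k]? = some true := by
  cases k with
  | zero => omega
  | succ m =>
    simp only [zStr, List.getElem?_cons_succ, List.getElem?_replicate]
    rw [if_pos (by omega)]

lemma zStar_get (n : ℕ) {k : ℕ} (hk : k < pOf n) : (zStar n)[k]? = some true := by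
  simp only [zStar, List.getElem?_replicate]
  rw [if_pos hk]

lemma binEnc_get (r i : ℕ) {k : ℕ} (hk : k < r) :
    (binEnc r i)[k]? = some (Nat.testBit i (r-1-k)) := by
  simp [binEnc, List.getElem?_map, List.getElem?_range hk]

lemma peel {l₁ l₂ : List Bool} {m : ℕ} (h : l₁.length = m) (k : ℕ) :
    (l₁ ++ l₂)[m + k]? = l₂[k]? := by
  rw [List.getElem?_append_right (by omega)]
  congr 1
  omega

/-- generic triple-block string -/
def T3 (n : ℕ) (B1 B2 B3 : List Bool) : List Bool :=
  zStr n ++ B1 ++ zStar n ++ zStr n ++ B2 ++ zStar n ++ zStr n ++ B3 ++ zStar n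

section T3
variable {n : ℕ} {B1 B2 B3 : List Bool} {b1 b2 b3 : ℕ}
variable (hp1 : 1 ≤ pOf n) (hb1 : B1.length = b1) (hb2 : B2.length = b2) (hb3 : B3.length = b3)

lemma T3_assoc : T3 n B1 B2 B3 = zStr n ++ (B1 ++ (zStar n ++ (zStr n ++ (B2 ++ (zStar n ++
    (zStr n ++ (B3 ++ zStar n))))))) := by
  simp [T3, List.append_assoc]

include hp1 hb1 hb2 hb3 in
lemma T3_length : (T3 n B1 B2 B3).length = 6*pOf n + (b1+b2+b3) := by
  simp [T3, zStr_length n hp1, zStar_length n, hb1, hb2, hb3]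
  ring

include hp1 in
lemma T3_z1 {k : ℕ} (hk : k < pOf n) : (T3 n B1 B2 B3)[k]? = (zStr n)[k]? := by
  rw [T3_assoc, List.getElem?_append_left (by rw [zStr_length n hp1]; omega)]

include hp1 hb1 in
lemma T3_B1 {k : ℕ} (hk : k < b1) : (T3 n B1 B2 B3)[pOf n + k]? = B1[k]? := by
  rw [T3_assoc, peel (zStr_length n hp1), List.getElem?_append_left (by omega)]

include hp1 hb1 in
lemma T3_zs1 {k : ℕ} (hk : k < pOf n) : (T3 n B1 B2 B3)[pOf n + b1 + k]? = some true := by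
  rw [T3_assoc, show pOf n + b1 + k = pOf n + (b1 + k) by ring, peel (zStr_length n hp1),
    peel hb1, List.getElem?_append_left (by rw [zStar_length n]; omega), zStar_get n hk]

include hp1 hb1 in
lemma T3_z2 {k : ℕ} (hk : k < pOf n) :
    (T3 n B1 B2 B3)[2*pOf n + b1 + k]? = (zStr n)[k]? := by
  rw [T3_assoc, show 2*pOf n + b1 + k = pOf n + (b1 + (pOf n + k)) by ring, peel (zStr_length n hp1),
    peel hb1, peel (zStar_length n), List.getElem?_append_left (by rw [zStr_length n hp1]; omega)]

include hp1 hb1 hb2 in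
lemma T3_B2 {k : ℕ} (hk : k < b2) : (T3 n B1 B2 B3)[3*pOf n + b1 + k]? = B2[k]? := by
  rw [T3_assoc, show 3*pOf n + b1 + k = pOf n + (b1 + (pOf n + (pOf n + k))) by ring,
    peel (zStr_length n hp1), peel hb1, peel (zStar_length n), peel (zStr_length n hp1),
    List.getElem?_append_left (by omega)]

include hp1 hb1 hb2 in
lemma T3_zs2 {k : ℕ} (hk : k < pOf n) :
    (T3 n B1 B2 B3)[3*pOf n + b1 + b2 + k]? = some true := by
  rw [T3_assoc, show 3*pOf n + b1 + b2 + k = pOf n + (b1 + (pOf n + (pOf n + (b2 + k)))) by ring,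
    peel (zStr_length n hp1), peel hb1, peel (zStar_length n), peel (zStr_length n hp1),
    peel hb2, List.getElem?_append_left (by rw [zStar_length n]; omega), zStar_get n hk]

include hp1 hb1 hb2 in
lemma T3_z3 {k : ℕ} (hk : k < pOf n) :
    (T3 n B1 B2 B3)[4*pOf n + b1 + b2 + k]? = (zStr n)[k]? := by
  rw [T3_assoc, show 4*pOf n + b1 + b2 + k = pOf n + (b1 + (pOf n + (pOf n + (b2 + (pOf n + k))))) by ring,
    peel (zStr_length n hp1), peel hb1, peel (zStar_length n), peel (zStr_length n hp1),
    peel hb2, peel (zStar_length n), List.getElem?_append_left (by rw [zStr_length n hp1]; omega)]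

include hp1 hb1 hb2 hb3 in
lemma T3_B3 {k : ℕ} (hk : k < b3) : (T3 n B1 B2 B3)[5*pOf n + b1 + b2 + k]? = B3[k]? := by
  rw [T3_assoc, show 5*pOf n + b1 + b2 + k
      = pOf n + (b1 + (pOf n + (pOf n + (b2 + (pOf n + (pOf n + k)))))) by ring,
    peel (zStr_length n hp1), peel hb1, peel (zStar_length n), peel (zStr_length n hp1),
    peel hb2, peel (zStar_length n), peel (zStr_length n hp1),
    List.getElem?_append_left (by omega)]

include hp1 hb1 hb2 hb3 in
lemma T3_zs3 {k : ℕ} (hk : k < pOf n) :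
    (T3 n B1 B2 B3)[5*pOf n + b1 + b2 + b3 + k]? = some true := by
  rw [T3_assoc, show 5*pOf n + b1 + b2 + b3 + k
      = pOf n + (b1 + (pOf n + (pOf n + (b2 + (pOf n + (pOf n + (b3 + k))))))) by ring,
    peel (zStr_length n hp1), peel hb1, peel (zStar_length n), peel (zStr_length n hp1),
    peel hb2, peel (zStar_length n), peel (zStr_length n hp1), peel hb3, zStar_get n hk]

include hp1 in
lemma T3_f0 : (T3 n B1 B2 B3)[0]? = some false := by
  rw [T3_z1 hp1 (by omega), zStr_get_zero]

include hp1 hb1 in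
lemma T3_fc1 : (T3 n B1 B2 B3)[2*pOf n + b1]? = some false := by
  have := T3_z2 (B2 := B2) (B3 := B3) hp1 hb1 (k := 0) (by omega)
  simpa [zStr_get_zero] using this

include hp1 hb1 hb2 in
lemma T3_fc2 : (T3 n B1 B2 B3)[4*pOf n + b1 + b2]? = some false := by
  have := T3_z3 (B3 := B3) hp1 hb1 hb2 (k := 0) (by omega)
  simpa [zStr_get_zero] using this

include hp1 hb1 hb2 hb3 in
lemma T3_true {k : ℕ} (hL : k < 6*pOf n + (b1+b2+b3))
    (h0 : k ≠ 0) (hc1 : k ≠ 2*pOf n + b1) (hc2 : k ≠ 4*pOf n + b1 + b2)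
    (hA : k < pOf n ∨ pOf n + b1 ≤ k)
    (hB : k < 3*pOf n + b1 ∨ 3*pOf n + b1 + b2 ≤ k)
    (hC : k < 5*pOf n + b1 + b2 ∨ 5*pOf n + b1 + b2 + b3 ≤ k) :
    (T3 n B1 B2 B3)[k]? = some true := by
  have hcase : (0 < k ∧ k < pOf n) ∨ (pOf n + b1 ≤ k ∧ k < 2*pOf n + b1)
      ∨ (2*pOf n + b1 < k ∧ k < 3*pOf n + b1)
      ∨ (3*pOf n + b1 + b2 ≤ k ∧ k < 4*pOf n + b1 + b2)
      ∨ (4*pOf n + b1 + b2 < k ∧ k < 5*pOf n + b1 + b2)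
      ∨ (5*pOf n + b1 + b2 + b3 ≤ k ∧ k < 6*pOf n + (b1+b2+b3)) := by omega
  rcases hcase with ⟨h, h'⟩ | ⟨h, h'⟩ | ⟨h, h'⟩ | ⟨h, h'⟩ | ⟨h, h'⟩ | ⟨h, h'⟩
  · rw [T3_z1 hp1 h', zStr_get_pos n h h']
  · obtain ⟨m, hm, rfl⟩ : ∃ m, m < pOf n ∧ k = pOf n + b1 + m := ⟨k - pOf n - b1, by omega, by omega⟩
    exact T3_zs1 hp1 hb1 hm
  · obtain ⟨m, hm, rfl⟩ : ∃ m, (0 < m ∧ m < pOf n) ∧ k = 2*pOf n + b1 + m :=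
      ⟨k - 2*pOf n - b1, by omega, by omega⟩
    rw [T3_z2 hp1 hb1 hm.2, zStr_get_pos n hm.1 hm.2]
  · obtain ⟨m, hm, rfl⟩ : ∃ m, m < pOf n ∧ k = 3*pOf n + b1 + b2 + m :=
      ⟨k - 3*pOf n - b1 - b2, by omega, by omega⟩
    exact T3_zs2 hp1 hb1 hb2 hm
  · obtain ⟨m, hm, rfl⟩ : ∃ m, (0 < m ∧ m < pOf n) ∧ k = 4*pOf n + b1 + b2 + m :=
      ⟨k - 4*pOf n - b1 - b2, by omega, by omega⟩
    rw [T3_z3 hp1 hb1 hb2 hm.2, zStr_get_pos n hm.1 hm.2]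
  · obtain ⟨m, hm, rfl⟩ : ∃ m, m < pOf n ∧ k = 5*pOf n + b1 + b2 + b3 + m :=
      ⟨k - 5*pOf n - b1 - b2 - b3, by omega, by omega⟩
    exact T3_zs3 hp1 hb1 hb2 hb3 hm

include hp1 hb1 hb2 hb3 in
lemma T3_pattern {k : ℕ} (hq1 : b1 ≤ pOf n) (hq2 : b2 ≤ pOf n) (hq3 : b3 ≤ pOf n)
    (hkL : k + pOf n < 6*pOf n + (b1+b2+b3))
    (h0 : (T3 n B1 B2 B3)[k]? = some false)
    (h1 : (T3 n B1 B2 B3)[k + pOf n]? = some false) :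
    k = 0 ∨ k = 2*pOf n + b1 ∨ k = 4*pOf n + b1 + b2 := by
  by_contra hc
  have hkey : (pOf n ≤ k ∧ k < pOf n + b1) ∨ (3*pOf n + b1 ≤ k ∧ k < 3*pOf n + b1 + b2)
      ∨ (5*pOf n + b1 + b2 ≤ k ∧ k < 5*pOf n + b1 + b2 + b3) := by
    by_contra hc2
    rw [T3_true hp1 hb1 hb2 hb3 (by omega) (by omega) (by omega) (by omega)
      (by omega) (by omega) (by omega)] at h0
    simp at h0
  rcases hkey with ⟨h, h'⟩ | ⟨h, h'⟩ | ⟨h, h'⟩ <;>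
  · rw [T3_true hp1 hb1 hb2 hb3 (by omega) (by omega) (by omega) (by omega)
      (by omega) (by omega) (by omega)] at h1
    simp at h1

end T3

lemma elem_of_match {s t : List Bool} {d l : ℕ} (hm : s.drop d = t.take l)
    {m : ℕ} (hml : m < l) : s[d + m]? = t[m]? := by
  have := congrArg (fun u : List Bool => u[m]?) hm
  simpa [List.getElem?_drop, List.getElem?_take, hml] using this

lemma candidates {n : ℕ} {B1 B2 B3 C1 C2 C3 : List Bool} {b1 b2 b3 : ℕ}
    (hp1 : 1 ≤ pOf n) (hb1 : B1.length = b1) (hb2 : B2.length = b2) (hb3 : B3.length = b3)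
    (hq1 : b1 ≤ pOf n) (hq2 : b2 ≤ pOf n) (hq3 : b3 ≤ pOf n)
    (hC1 : C1[0]? = some false) (hC1len : 0 < C1.length)
    {l : ℕ} (hl1 : 1 ≤ l) (hl2 : l ≤ 6*pOf n + (b1+b2+b3))
    (hP : (T3 n B1 B2 B3).drop ((T3 n B1 B2 B3).length - l) = (T3 n C1 C2 C3).take l) :
    l = 6*pOf n + (b1+b2+b3) ∨ l = 4*pOf n + (b2+b3) ∨ l = 2*pOf n + b3 := by
  rw [T3_length hp1 hb1 hb2 hb3] at hP
  by_cases hs : l ≤ pOf n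
  · exfalso
    have e0 := elem_of_match hP (m := 0) hl1
    rw [show 6*pOf n + (b1+b2+b3) - l + 0 = 5*pOf n + b1 + b2 + b3 + (pOf n - l) by omega,
      T3_zs3 hp1 hb1 hb2 hb3 (by omega), T3_f0 hp1] at e0
    simp at e0
  · have e0 := elem_of_match hP (m := 0) hl1
    rw [add_zero, T3_f0 hp1] at e0
    have ep := elem_of_match hP (m := pOf n) (by omega)
    have htp : (T3 n C1 C2 C3)[pOf n]? = some false := by
      have h := T3_B1 (B2 := C2) (B3 := C3) (n := n) hp1 (rfl : C1.length = C1.length)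
        (k := 0) hC1len
      rw [add_zero] at h
      rw [h, hC1]
    rw [htp] at ep
    have hpat := T3_pattern hp1 hb1 hb2 hb3 hq1 hq2 hq3
      (show (6*pOf n + (b1+b2+b3) - l) + pOf n < 6*pOf n + (b1+b2+b3) by omega) e0 ep
    omega


/-- for distinct h, h' with arcs e_h = (v_i, v_j) and
e_{h'} = (v_{i'}, v_{j'}): |overlap(s_h, s'_{h'})| = n−2 if the head of e_h is the
tail of e_{h'} (i.e. j = i'), and 0 otherwise; all other overlaps are 0. -/
theorem overlap_distinct_arcs (n i j i' j' h h' : ℕ) (hn : 64 ≤ n)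
    (hi1 : 1 ≤ i) (hi2 : i ≤ n) (hj1 : 1 ≤ j) (hj2 : j ≤ n) (hij : i ≠ j)
    (hi1' : 1 ≤ i') (hi2' : i' ≤ n) (hj1' : 1 ≤ j') (hj2' : j' ≤ n) (hij' : i' ≠ j')
    (hh1 : 1 ≤ h) (hh2 : h ≤ n ^ 2) (hh1' : 1 ≤ h') (hh2' : h' ≤ n ^ 2)
    (hhh : h ≠ h') (harc : (i, j) ≠ (i', j')) :
    ovLen (sh n i j h) (sh' n i' j' h') = (if j = i' then n - 2 else 0) ∧
      ovLen (sh' n i j h) (sh n i' j' h') = 0 ∧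
      ovLen (sh n i j h) (sh n i' j' h') = 0 ∧
      ovLen (sh' n i j h) (sh' n i' j' h') = 0 := by
  have hp1 : 1 ≤ pOf n := by unfold pOf; omega
  have hp21 : 21 ≤ pOf n := by unfold pOf; omega
  have hqn : 2*pOf n + qOf n + 1 = n := by unfold qOf pOf; omega
  have hq20 : 20 ≤ qOf n := by unfold qOf pOf; omega
  have hqp : qOf n ≤ pOf n := by unfold qOf pOf; omega
  have hpq2 : pOf n ≤ qOf n + 2 := by unfold qOf pOf; omega
  have hpow : ∀ r s : ℕ, r ≤ s → (2:ℕ)^r ≤ 2^s :=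
    fun r s hrs => Nat.pow_le_pow_right (by norm_num) hrs
  have hsize : 2*n^2 < 2^(qOf n - 2) := by
    have haux := aux_pow (qOf n - 20)
    rw [show 3*(qOf n - 20) + 65 = 3*qOf n + 5 by omega] at haux
    rw [show qOf n - 20 + 18 = qOf n - 2 by omega] at haux
    have hn35 : n ≤ 3*qOf n + 5 := by omega
    have h2 : n^2 ≤ (3*qOf n + 5)^2 := Nat.pow_le_pow_left hn35 2
    omega
  have hxq2 : ∀ a : ℕ, a ≤ n → a < 2^(qOf n - 2) := by
    intro a ha
    have h5 : n ≤ n^2 := by nlinarith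
    omega
  have hyq2 : ∀ a : ℕ, a ≤ n^2 → 2*a < 2^(qOf n - 1) := by
    intro a ha
    have h4 : (2:ℕ)^(qOf n - 2) ≤ 2^(qOf n - 1) := hpow _ _ (by omega)
    omega
  have lxi : (xEnc n i).length = qOf n - 1 := by unfold xEnc; exact binEnc_length _ _
  have lxj : (xEnc n j).length = qOf n - 1 := by unfold xEnc; exact binEnc_length _ _
  have lxi' : (xEnc n i').length = qOf n - 1 := by unfold xEnc; exact binEnc_length _ _
  have lxj' : (xEnc n j').length = qOf n - 1 := by unfold xEnc; exact binEnc_length _ _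
  have lyh : (yEnc n h).length = qOf n := by unfold yEnc; exact binEnc_length _ _
  have lyh' : (yEnc n h').length = qOf n := by unfold yEnc; exact binEnc_length _ _
  have hxfirst : ∀ a : ℕ, a ≤ n → (xEnc n a)[0]? = some false := by
    intro a ha
    unfold xEnc
    rw [binEnc_get _ _ (show 0 < qOf n - 1 by omega)]
    have hb : Nat.testBit a (qOf n - 1 - 1 - 0) = false :=
      Nat.testBit_lt_two_pow (lt_of_lt_of_le (hxq2 a ha) (hpow _ _ (by omega)))
    rw [hb]
  have hyfirst : ∀ a : ℕ, a ≤ n^2 → (yEnc n a)[0]? = some false := by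
    intro a ha
    unfold yEnc
    rw [binEnc_get _ _ (show 0 < qOf n by omega)]
    have hb : Nat.testBit (2*a) (qOf n - 1 - 0) = false :=
      Nat.testBit_lt_two_pow (lt_of_lt_of_le (hyq2 a ha) (hpow _ _ (by omega)))
    rw [hb]
  have hylast : ∀ a : ℕ, (yEnc n a)[qOf n - 1]? = some false := by
    intro a
    unfold yEnc
    rw [binEnc_get _ _ (show qOf n - 1 < qOf n by omega),
      show qOf n - 1 - (qOf n - 1) = 0 by omega]
    simp [Nat.testBit_zero]
  have xeq : ∀ a b : ℕ, a ≤ n → b ≤ n →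
      (∀ k, k < qOf n - 1 → (xEnc n a)[k]? = (xEnc n b)[k]?) → a = b := by
    intro a b ha hb hk
    refine eq_of_testBit_rev (r := qOf n - 1)
      (lt_of_lt_of_le (hxq2 a ha) (hpow _ _ (by omega)))
      (lt_of_lt_of_le (hxq2 b hb) (hpow _ _ (by omega))) ?_
    intro k hkq
    have e := hk k hkq
    unfold xEnc at e
    rw [binEnc_get _ _ hkq, binEnc_get _ _ hkq] at e
    exact Option.some.inj e
  have yeq : ∀ a b : ℕ, a ≤ n^2 → b ≤ n^2 →
      (∀ k, k < qOf n → (yEnc n a)[k]? = (yEnc n b)[k]?) → a = b := by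
    intro a b ha hb hk
    have h2 : 2*a = 2*b := by
      refine eq_of_testBit_rev (r := qOf n)
        (lt_of_lt_of_le (hyq2 a ha) (hpow _ _ (by omega)))
        (lt_of_lt_of_le (hyq2 b hb) (hpow _ _ (by omega))) ?_
      intro k hkq
      have e := hk k hkq
      unfold yEnc at e
      rw [binEnc_get _ _ hkq, binEnc_get _ _ hkq] at e
      exact Option.some.inj e
    omega
  have hsA : sh n i j h = T3 n (yEnc n h) (xEnc n i) (xEnc n j) := rfl
  have hsA' : sh' n i j h = T3 n (xEnc n i) (xEnc n j) (yEnc n h) := rfl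
  have hsB : sh n i' j' h' = T3 n (yEnc n h') (xEnc n i') (xEnc n j') := rfl
  have hsB' : sh' n i' j' h' = T3 n (xEnc n i') (xEnc n j') (yEnc n h') := rfl
  have hlenA : (sh n i j h).length = 6*pOf n + 3*qOf n - 2 := by
    rw [hsA, T3_length hp1 lyh lxi lxj]; omega
  have hlenA' : (sh' n i j h).length = 6*pOf n + 3*qOf n - 2 := by
    rw [hsA', T3_length hp1 lxi lxj lyh]; omega
  have hlenB : (sh n i' j' h').length = 6*pOf n + 3*qOf n - 2 := by
    rw [hsB, T3_length hp1 lyh' lxi' lxj']; omega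
  have hlenB' : (sh' n i' j' h').length = 6*pOf n + 3*qOf n - 2 := by
    rw [hsB', T3_length hp1 lxi' lxj' lyh']; omega
  refine ⟨?_, ?_, ?_, ?_⟩
  · -- ovLen (sh n i j h) (sh' n i' j' h')
    have key1 : ∀ l : ℕ, 1 ≤ l → l ≤ 6*pOf n + 3*qOf n - 2 →
        (sh n i j h).drop ((sh n i j h).length - l) = (sh' n i' j' h').take l →
        l = 2*pOf n + qOf n - 1 ∧ j = i' := by
      intro l hl0 hl2 hP
      rw [hsA, hsB'] at hP
      have hcand := candidates hp1 lyh lxi lxj (by omega) (by omega) (by omega)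
        (hxfirst i' hi2') (by rw [lxi']; omega) hl0 (by omega) hP
      rw [T3_length hp1 lyh lxi lxj] at hP
      rcases hcand with hc | hc | hc
      · exfalso
        rw [show 6*pOf n + (qOf n + (qOf n - 1) + (qOf n - 1)) - l = 0 by omega] at hP
        have e := elem_of_match hP (m := 2*pOf n + (qOf n - 1)) (by omega)
        rw [show (0:ℕ) + (2*pOf n + (qOf n - 1)) = pOf n + qOf n + (pOf n - 1) by omega] at e
        rw [T3_zs1 hp1 lyh (by omega)] at e
        rw [T3_fc1 hp1 lxi'] at e
        simp at e
      · exfalso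
        rw [show 6*pOf n + (qOf n + (qOf n - 1) + (qOf n - 1)) - l = 2*pOf n + qOf n by omega] at hP
        have hii : i = i' := by
          refine xeq i i' hi2 hi2' ?_
          intro k hk
          have e := elem_of_match hP (m := pOf n + k) (by omega)
          rw [show 2*pOf n + qOf n + (pOf n + k) = 3*pOf n + qOf n + k by omega] at e
          rw [T3_B2 hp1 lyh lxi hk, T3_B1 hp1 lxi' hk] at e
          exact e
        have hjj : j = j' := by
          refine xeq j j' hj2 hj2' ?_
          intro k hk
          have e := elem_of_match hP (m := 3*pOf n + (qOf n - 1) + k) (by omega)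
          rw [show 2*pOf n + qOf n + (3*pOf n + (qOf n - 1) + k)
              = 5*pOf n + qOf n + (qOf n - 1) + k by omega] at e
          rw [T3_B3 hp1 lyh lxi lxj hk, T3_B2 hp1 lxi' lxj' hk] at e
          exact e
        exact harc (by rw [hii, hjj])
      · have hji : j = i' := by
          rw [show 6*pOf n + (qOf n + (qOf n - 1) + (qOf n - 1)) - l
              = 4*pOf n + 2*qOf n - 1 by omega] at hP
          refine xeq j i' hj2 hi2' ?_
          intro k hk
          have e := elem_of_match hP (m := pOf n + k) (by omega)
          rw [show 4*pOf n + 2*qOf n - 1 + (pOf n + k)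
              = 5*pOf n + qOf n + (qOf n - 1) + k by omega] at e
          rw [T3_B3 hp1 lyh lxi lxj hk, T3_B1 hp1 lxi' hk] at e
          exact e
        exact ⟨by omega, hji⟩
    unfold ovLen
    by_cases hji : j = i'
    · rw [if_pos hji, Nat.findGreatest_eq_iff]
      refine ⟨?_, fun _ => ?_, ?_⟩
      · rw [hlenA, hlenB', min_self]; omega
      · show (sh n i j h).drop ((sh n i j h).length - (n-2)) = (sh' n i' j' h').take (n-2)
        rw [hlenA]
        have hA2 : sh n i j h = (zStr n ++ yEnc n h ++ zStar n ++ zStr n ++ xEnc n i ++ zStar n)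
            ++ (zStr n ++ xEnc n j ++ zStar n) := by
          simp [sh, List.append_assoc]
        have hB2 : sh' n i' j' h' = (zStr n ++ xEnc n i' ++ zStar n)
            ++ (zStr n ++ xEnc n j' ++ zStar n ++ zStr n ++ yEnc n h' ++ zStar n) := by
          simp [sh', List.append_assoc]
        rw [hA2, hB2,
          show 6*pOf n + 3*qOf n - 2 - (n-2) = 4*pOf n + 2*qOf n - 1 by omega,
          List.drop_left' (by
            simp only [List.length_append, zStr_length n hp1, zStar_length n, lyh, lxi]
            omega),
          List.take_left' (by
            simp only [List.length_append, zStr_length n hp1, zStar_length n, lxi']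
            omega),
          hji]
      · intro l hlt hle hP
        replace hP : (sh n i j h).drop ((sh n i j h).length - l)
            = (sh' n i' j' h').take l := hP
        rw [hlenA, hlenB', min_self] at hle
        have := key1 l (by omega) hle hP
        omega
    · rw [if_neg hji, Nat.findGreatest_eq_iff]
      refine ⟨Nat.zero_le _, by simp, ?_⟩
      intro l hl0 hle hP
      replace hP : (sh n i j h).drop ((sh n i j h).length - l)
          = (sh' n i' j' h').take l := hP
      rw [hlenA, hlenB', min_self] at hle
      exact hji (key1 l hl0 hle hP).2
  · -- ovLen (sh' n i j h) (sh n i' j' h') = 0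
    unfold ovLen
    rw [Nat.findGreatest_eq_iff]
    refine ⟨Nat.zero_le _, by simp, ?_⟩
    intro l hl0 hle hP
    replace hP : (sh' n i j h).drop ((sh' n i j h).length - l) = (sh n i' j' h').take l := hP
    rw [hlenA', hlenB, min_self] at hle
    rw [hsA', hsB] at hP
    have hcand := candidates hp1 lxi lxj lyh (by omega) (by omega) (by omega)
      (hyfirst h' (by omega)) (by rw [lyh']; omega) hl0 (by omega) hP
    rw [T3_length hp1 lxi lxj lyh] at hP
    rcases hcand with hc | hc | hc
    · rw [show 6*pOf n + ((qOf n - 1) + (qOf n - 1) + qOf n) - l = 0 by omega] at hP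
      have e := elem_of_match hP (m := 2*pOf n + (qOf n - 1)) (by omega)
      rw [show (0:ℕ) + (2*pOf n + (qOf n - 1)) = 2*pOf n + (qOf n - 1) by omega] at e
      rw [T3_fc1 hp1 lxi] at e
      rw [show 2*pOf n + (qOf n - 1) = pOf n + qOf n + (pOf n - 1) by omega] at e
      rw [T3_zs1 hp1 lyh' (by omega)] at e
      simp at e
    · rw [show 6*pOf n + ((qOf n - 1) + (qOf n - 1) + qOf n) - l
          = 2*pOf n + qOf n - 1 by omega] at hP
      have e := elem_of_match hP (m := 2*pOf n + (qOf n - 1)) (by omega)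
      rw [show 2*pOf n + qOf n - 1 + (2*pOf n + (qOf n - 1))
          = 4*pOf n + (qOf n - 1) + (qOf n - 1) by omega] at e
      rw [T3_fc2 hp1 lxi lxj] at e
      rw [show 2*pOf n + (qOf n - 1) = pOf n + qOf n + (pOf n - 1) by omega] at e
      rw [T3_zs1 hp1 lyh' (by omega)] at e
      simp at e
    · rw [show 6*pOf n + ((qOf n - 1) + (qOf n - 1) + qOf n) - l
          = 4*pOf n + 2*qOf n - 2 by omega] at hP
      have hyy : h = h' := by
        refine yeq h h' (by omega) (by omega) ?_
        intro k hk
        have e := elem_of_match hP (m := pOf n + k) (by omega)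
        rw [show 4*pOf n + 2*qOf n - 2 + (pOf n + k)
            = 5*pOf n + (qOf n - 1) + (qOf n - 1) + k by omega] at e
        rw [T3_B3 hp1 lxi lxj lyh hk, T3_B1 hp1 lyh' hk] at e
        exact e
      exact hhh hyy
  · -- ovLen (sh n i j h) (sh n i' j' h') = 0
    unfold ovLen
    rw [Nat.findGreatest_eq_iff]
    refine ⟨Nat.zero_le _, by simp, ?_⟩
    intro l hl0 hle hP
    replace hP : (sh n i j h).drop ((sh n i j h).length - l) = (sh n i' j' h').take l := hP
    rw [hlenA, hlenB, min_self] at hle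
    rw [hsA, hsB] at hP
    have hcand := candidates hp1 lyh lxi lxj (by omega) (by omega) (by omega)
      (hyfirst h' (by omega)) (by rw [lyh']; omega) hl0 (by omega) hP
    rw [T3_length hp1 lyh lxi lxj] at hP
    rcases hcand with hc | hc | hc
    · rw [show 6*pOf n + (qOf n + (qOf n - 1) + (qOf n - 1)) - l = 0 by omega] at hP
      have hyy : h = h' := by
        refine yeq h h' (by omega) (by omega) ?_
        intro k hk
        have e := elem_of_match hP (m := pOf n + k) (by omega)
        rw [show (0:ℕ) + (pOf n + k) = pOf n + k by omega] at e
        rw [T3_B1 hp1 lyh hk, T3_B1 hp1 lyh' hk] at e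
        exact e
      exact hhh hyy
    · rw [show 6*pOf n + (qOf n + (qOf n - 1) + (qOf n - 1)) - l
          = 2*pOf n + qOf n by omega] at hP
      have e := elem_of_match hP (m := pOf n + (qOf n - 1)) (by omega)
      rw [show 2*pOf n + qOf n + (pOf n + (qOf n - 1))
          = 3*pOf n + qOf n + (qOf n - 1) + 0 by omega] at e
      rw [T3_zs2 hp1 lyh lxi (by omega)] at e
      rw [T3_B1 hp1 lyh' (by omega), hylast h'] at e
      simp at e
    · rw [show 6*pOf n + (qOf n + (qOf n - 1) + (qOf n - 1)) - l
          = 4*pOf n + 2*qOf n - 1 by omega] at hP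
      have e := elem_of_match hP (m := pOf n + (qOf n - 1)) (by omega)
      rw [show 4*pOf n + 2*qOf n - 1 + (pOf n + (qOf n - 1))
          = 5*pOf n + qOf n + (qOf n - 1) + (qOf n - 1) + 0 by omega] at e
      rw [T3_zs3 hp1 lyh lxi lxj (by omega)] at e
      rw [T3_B1 hp1 lyh' (by omega), hylast h'] at e
      simp at e
  · -- ovLen (sh' n i j h) (sh' n i' j' h') = 0
    unfold ovLen
    rw [Nat.findGreatest_eq_iff]
    refine ⟨Nat.zero_le _, by simp, ?_⟩
    intro l hl0 hle hP
    replace hP : (sh' n i j h).drop ((sh' n i j h).length - l) = (sh' n i' j' h').take l := hP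
    rw [hlenA', hlenB', min_self] at hle
    rw [hsA', hsB'] at hP
    have hcand := candidates hp1 lxi lxj lyh (by omega) (by omega) (by omega)
      (hxfirst i' hi2') (by rw [lxi']; omega) hl0 (by omega) hP
    rw [T3_length hp1 lxi lxj lyh] at hP
    rcases hcand with hc | hc | hc
    · rw [show 6*pOf n + ((qOf n - 1) + (qOf n - 1) + qOf n) - l = 0 by omega] at hP
      have hyy : h = h' := by
        refine yeq h h' (by omega) (by omega) ?_
        intro k hk
        have e := elem_of_match hP (m := 5*pOf n + (qOf n - 1) + (qOf n - 1) + k) (by omega)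
        rw [show (0:ℕ) + (5*pOf n + (qOf n - 1) + (qOf n - 1) + k)
            = 5*pOf n + (qOf n - 1) + (qOf n - 1) + k by omega] at e
        rw [T3_B3 hp1 lxi lxj lyh hk, T3_B3 hp1 lxi' lxj' lyh' hk] at e
        exact e
      exact hhh hyy
    · rw [show 6*pOf n + ((qOf n - 1) + (qOf n - 1) + qOf n) - l
          = 2*pOf n + qOf n - 1 by omega] at hP
      have e := elem_of_match hP (m := 4*pOf n + (qOf n - 1) + (qOf n - 1)) (by omega)
      rw [show 2*pOf n + qOf n - 1 + (4*pOf n + (qOf n - 1) + (qOf n - 1))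
          = 5*pOf n + (qOf n - 1) + (qOf n - 1) + qOf n + (pOf n - 1) by omega] at e
      rw [T3_zs3 hp1 lxi lxj lyh (by omega)] at e
      rw [T3_fc2 hp1 lxi' lxj'] at e
      simp at e
    · rw [show 6*pOf n + ((qOf n - 1) + (qOf n - 1) + qOf n) - l
          = 4*pOf n + 2*qOf n - 2 by omega] at hP
      have e := elem_of_match hP (m := 2*pOf n + (qOf n - 1)) (by omega)
      rw [show 4*pOf n + 2*qOf n - 2 + (2*pOf n + (qOf n - 1))
          = 5*pOf n + (qOf n - 1) + (qOf n - 1) + qOf n + (pOf n - 1) by omega] at e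
      rw [T3_zs3 hp1 lxi lxj lyh (by omega)] at e
      rw [T3_fc1 hp1 lxi'] at e
      simp at e
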